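/- Fix reals c > -1, λ, ρ₀ ≠ 0, let B ≥ 4, and let γ⁰, …, γ^{B−4} be arbitrary reals. For reals U, V with U+c > 0, V+c > 0 define G₂(U|V) := 4λ²/(√(U+c)·√(V+c)·(√(U+c)+√(V+c))²). For a real Y and a finite family (X^{β'})_{β' ∈ I} of reals (all translates by c positive), define F(Y; I) := ((−2λ)^{3(B−1)−4}/ρ₀)·Σ_{M=0}^{B−4} γ^M · (d^M/dt^M)[(Y+c−2t)^{−3/2}·Π_{β'∈I}(X^{β'}+c−2t)^{−3/2}] at t = 0, and for U ≠ V define H(U,V; I) := 16λ²·(∂/∂V)[(F(U; I) − F(V; I))/(U−V)]. Then for all reals X¹, X², …, X^B with X^β+c > 0 for all β and X¹ ≠ X^β for β = 2,…,B: −λ·Σ_{β=2}^{B} [ H(X¹, X^β; {2,…,B}\{β}) + 2·G₂(X¹|X^β)·F(X¹; {2,…,B}\{β}) ] = ((−2λ)^{3B−4}/ρ₀)·Σ_{M=0}^{B−4} Σ_{j=0}^{M} Σ_{l=0}^{j+1} γ^M·C(M,j)·((2j+1)!!·(2l+1)/(2l+1)!!)·(X¹+c)^{−(j−l+2)} ·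 Σ_{β=2}^{B} (d^l/dt^l)[(X^β+c−2t)^{−3/2}] · (d^{M−j}/dt^{M−j})[Π_{β'∈{2,…,B}\{β}}(X^{β'}+c−2t)^{−3/2}] evaluated at t = 0, where C(M,j) is the binomial coefficient and (2m+1)!! := (2m+1)!/(2^m·m!). -/

import Mathlib

noncomputable def df (m : ℕ) : ℝ := ((2 * m + 1).factorial : ℝ) / (2 ^ m * (m.factorial : ℝ))

lemma df_pos (m : ℕ) : 0 < df m := by unfold df; positivity

lemma df_succ (k : ℕ) : df (k + 1) = (2 * (k:ℝ) + 3) * df k := by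
  unfold df
  have h1 : (2 * (k+1) + 1).factorial = (2*k+3) * ((2*k+2) * (2*k+1).factorial) := by
    have : 2 * (k+1) + 1 = (2*k+2) + 1 := by omega
    rw [this, Nat.factorial_succ]
    have h2 : 2*k+2 = (2*k+1)+1 := by omega
    rw [h2, Nat.factorial_succ]
  have h2 : (k+1).factorial = (k+1) * k.factorial := Nat.factorial_succ k
  rw [h1, h2]
  have hk : (k.factorial : ℝ) ≠ 0 := Nat.cast_ne_zero.mpr k.factorial_ne_zero
  have h2k : ((2*k+1).factorial : ℝ) ≠ 0 := Nat.cast_ne_zero.mpr (2*k+1).factorial_ne_zero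
  push_cast
  have hp : (2:ℝ) ^ k ≠ 0 := by positivity
  field_simp
  ring

lemma df_zero : df 0 = 1 := by simp [df]

noncomputable def gg (a t : ℝ) : ℝ := (Real.sqrt (a - 2*t) ^ 3)⁻¹
noncomputable def gr (k : ℕ) (a t : ℝ) : ℝ := (a - 2*t) ^ (-(2*(k:ℝ)+3)/2)

lemma gg_eq_gr {a t : ℝ} (h : 0 < a - 2*t) : gg a t = gr 0 a t := by
  unfold gg gr
  rw [Real.sqrt_eq_rpow, ← Real.rpow_natCast ((a-2*t) ^ ((1:ℝ)/2)) 3, ← Real.rpow_mul h.le,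
    ← Real.rpow_neg h.le]
  norm_num

lemma gr_hasDerivAt {a t : ℝ} (h : 0 < a - 2*t) (k : ℕ) :
    HasDerivAt (gr k a) ((2*(k:ℝ)+3) * gr (k+1) a t) t := by
  have h1 : HasDerivAt (fun t : ℝ => a - 2*t) (-2) t := by
    simpa using ((hasDerivAt_id t).const_mul (2:ℝ)).const_sub a
  have h2 := (Real.hasDerivAt_rpow_const (p := (-(2*(k:ℝ)+3)/2)) (Or.inl h.ne')).comp t h1
  refine h2.congr_deriv ?_
  unfold gr
  rw [show -(2*(k:ℝ)+3)/2 - 1 = -(2*((k:ℝ)+1)+3)/2 by ring]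
  push_cast
  ring

lemma isOpen_gset (a : ℝ) : IsOpen {s : ℝ | 0 < a - 2*s} := by
  have : {s : ℝ | 0 < a - 2*s} = {s : ℝ | 2*s < a} := by ext s; simp [sub_pos]
  rw [this]
  exact isOpen_lt (by continuity) continuous_const

lemma iteratedDeriv_gg {a : ℝ} (M : ℕ) : ∀ t : ℝ, 0 < a - 2*t →
    iteratedDeriv M (gg a) t = df M * gr M a t := by
  induction M with
  | zero => intro t ht; simpa [df_zero] using gg_eq_gr ht
  | succ M ih =>
    intro t ht
    rw [iteratedDeriv_succ]
    have hmem : {s : ℝ | 0 < a - 2*s} ∈ nhds t := (isOpen_gset a).mem_nhds ht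
    have hev : iteratedDeriv M (gg a) =ᶠ[nhds t] fun s => df M * gr M a s :=
      Filter.eventuallyEq_of_mem hmem (fun s hs => ih s hs)
    rw [hev.deriv_eq]
    have := ((gr_hasDerivAt ht M).const_mul (df M)).deriv
    rw [this, df_succ]
    ring

lemma sqrt_pow_inv_eq {a : ℝ} (ha : 0 < a) (k : ℕ) :
    (Real.sqrt a ^ (2*k+3))⁻¹ = a ^ (-(2*(k:ℝ)+3)/2) := by
  rw [Real.sqrt_eq_rpow, ← Real.rpow_natCast (a ^ ((1:ℝ)/2)) (2*k+3), ← Real.rpow_mul ha.le,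
    ← Real.rpow_neg ha.le]
  push_cast
  ring_nf

lemma iteratedDeriv_gg_zero {a : ℝ} (ha : 0 < a) (M : ℕ) :
    iteratedDeriv M (gg a) 0 = df M * (Real.sqrt a ^ (2*M+3))⁻¹ := by
  rw [iteratedDeriv_gg M 0 (by simpa using ha), sqrt_pow_inv_eq ha]
  unfold gr
  norm_num

lemma diffAt_iteratedDeriv {f : ℝ → ℝ} {s : Set ℝ} (hs : IsOpen s)
    (hf : ContDiffOn ℝ (⊤ : ℕ∞) f s) {x : ℝ} (hx : x ∈ s) (n : ℕ) :
    DifferentiableAt ℝ (iteratedDeriv n f) x := by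
  have h1 : DifferentiableOn ℝ (iteratedDerivWithin n f s) s :=
    hf.differentiableOn_iteratedDerivWithin (by exact_mod_cast lt_top_iff_ne_top.2 (by simp))
      hs.uniqueDiffOn
  have h2 : ∀ y ∈ s, iteratedDerivWithin n f s y = iteratedDeriv n f y := by
    intro y hy
    rw [iteratedDerivWithin_eq_iteratedFDerivWithin, iteratedDeriv_eq_iteratedFDeriv,
      iteratedFDerivWithin_of_isOpen n hs hy]
  have h3 : iteratedDerivWithin n f s =ᶠ[nhds x] iteratedDeriv n f :=
    Filter.eventuallyEq_of_mem (hs.mem_nhds hx) h2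
  exact (((h1 x hx).differentiableAt (hs.mem_nhds hx)).congr_of_eventuallyEq h3.symm)

lemma leibniz_iteratedDeriv {f g : ℝ → ℝ} {s : Set ℝ} (hs : IsOpen s)
    (hf : ContDiffOn ℝ (⊤ : ℕ∞) f s) (hg : ContDiffOn ℝ (⊤ : ℕ∞) g s) (n : ℕ) :
    ∀ x ∈ s, iteratedDeriv n (fun t => f t * g t) x
      = ∑ j ∈ Finset.range (n+1), (n.choose j : ℝ) * iteratedDeriv j f x
          * iteratedDeriv (n-j) g x := by
  induction n with
  | zero => intro x hx; simp
  | succ n ih =>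
    intro x hx
    rw [iteratedDeriv_succ]
    have hev : iteratedDeriv n (fun t => f t * g t) =ᶠ[nhds x]
        fun y => ∑ j ∈ Finset.range (n+1), (n.choose j : ℝ) * iteratedDeriv j f y
          * iteratedDeriv (n-j) g y :=
      Filter.eventuallyEq_of_mem (hs.mem_nhds hx) ih
    rw [hev.deriv_eq]
    have hterm : ∀ j ∈ Finset.range (n+1), HasDerivAt
        (fun y => (n.choose j : ℝ) * iteratedDeriv j f y * iteratedDeriv (n-j) g y)
        ((n.choose j : ℝ) * (iteratedDeriv (j+1) f x * iteratedDeriv (n-j) g x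
          + iteratedDeriv j f x * iteratedDeriv (n-j+1) g x)) x := by
      intro j _
      have hfd := (diffAt_iteratedDeriv hs hf hx j).hasDerivAt
      have hgd := (diffAt_iteratedDeriv hs hg hx (n-j)).hasDerivAt
      rw [show deriv (iteratedDeriv j f) x = iteratedDeriv (j+1) f x from
        (congrFun (iteratedDeriv_succ (n := j)) x).symm] at hfd
      rw [show deriv (iteratedDeriv (n-j) g) x = iteratedDeriv (n-j+1) g x from
        (congrFun (iteratedDeriv_succ (n := n-j)) x).symm] at hgd
      have := ((hfd.const_mul ((n.choose j : ℝ))).mul hgd)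
      refine this.congr_deriv ?_
      ring
    have hsum : HasDerivAt (fun y => ∑ j ∈ Finset.range (n+1),
        (n.choose j : ℝ) * iteratedDeriv j f y * iteratedDeriv (n-j) g y)
        (∑ j ∈ Finset.range (n+1), (n.choose j : ℝ) * (iteratedDeriv (j+1) f x
          * iteratedDeriv (n-j) g x + iteratedDeriv j f x * iteratedDeriv (n-j+1) g x)) x :=
      HasDerivAt.fun_sum hterm
    rw [hsum.deriv]
    have expand : ∀ j ∈ Finset.range (n+1),
        (n.choose j : ℝ) * (iteratedDeriv (j+1) f x * iteratedDeriv (n-j) g x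
          + iteratedDeriv j f x * iteratedDeriv (n-j+1) g x)
        = (n.choose j : ℝ) * iteratedDeriv (j+1) f x * iteratedDeriv (n-j) g x
          + (n.choose j : ℝ) * iteratedDeriv j f x * iteratedDeriv (n-j+1) g x := by
      intro j _; ring
    rw [Finset.sum_congr rfl expand, Finset.sum_add_distrib]
    rw [Finset.sum_range_succ' (fun j => ((n+1).choose j : ℝ) * iteratedDeriv j f x
      * iteratedDeriv (n+1-j) g x)]
    have pascal : ∀ j ∈ Finset.range (n+1),
        (((n+1).choose (j+1) : ℕ) : ℝ) * iteratedDeriv (j+1) f x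
          * iteratedDeriv (n+1-(j+1)) g x
        = (n.choose j : ℝ) * iteratedDeriv (j+1) f x * iteratedDeriv (n-j) g x
          + (n.choose (j+1) : ℝ) * iteratedDeriv (j+1) f x * iteratedDeriv (n-j) g x := by
      intro j _
      have h1 : (n+1).choose (j+1) = n.choose j + n.choose (j+1) := Nat.choose_succ_succ n j
      have h2 : n+1-(j+1) = n-j := by omega
      rw [h1, h2]
      push_cast
      ring
    rw [Finset.sum_congr rfl pascal, Finset.sum_add_distrib]
    have second : ∑ j ∈ Finset.range (n+1), (n.choose (j+1) : ℝ) * iteratedDeriv (j+1) f x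
          * iteratedDeriv (n-j) g x
        = ∑ j ∈ Finset.range (n+1), (n.choose j : ℝ) * iteratedDeriv j f x
          * iteratedDeriv (n-j+1) g x - (n.choose 0 : ℝ) * iteratedDeriv 0 f x
          * iteratedDeriv (n+1) g x := by
      have e1 : ∑ j ∈ Finset.range (n+2), (n.choose j : ℝ) * iteratedDeriv j f x
            * iteratedDeriv (n+1-j) g x
          = ∑ j ∈ Finset.range (n+1), (n.choose (j+1) : ℝ) * iteratedDeriv (j+1) f x
            * iteratedDeriv (n+1-(j+1)) g x + (n.choose 0 : ℝ) * iteratedDeriv 0 f x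
            * iteratedDeriv (n+1-0) g x :=
        Finset.sum_range_succ' (fun j => (n.choose j : ℝ) * iteratedDeriv j f x
          * iteratedDeriv (n+1-j) g x) (n+1)
      have e2 : ∑ j ∈ Finset.range (n+2), (n.choose j : ℝ) * iteratedDeriv j f x
            * iteratedDeriv (n+1-j) g x
          = ∑ j ∈ Finset.range (n+1), (n.choose j : ℝ) * iteratedDeriv j f x
            * iteratedDeriv (n+1-j) g x := by
        rw [Finset.sum_range_succ]
        simp [Nat.choose_succ_self]
      have e3 : ∀ j ∈ Finset.range (n+1), (n.choose j : ℝ) * iteratedDeriv j f x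
            * iteratedDeriv (n+1-j) g x
          = (n.choose j : ℝ) * iteratedDeriv j f x * iteratedDeriv (n-j+1) g x := by
        intro j hj
        have : n+1-j = n-j+1 := by
          have := Finset.mem_range.mp hj; omega
        rw [this]
      have e4 : ∀ j ∈ Finset.range (n+1), (n.choose (j+1) : ℝ) * iteratedDeriv (j+1) f x
            * iteratedDeriv (n+1-(j+1)) g x
          = (n.choose (j+1) : ℝ) * iteratedDeriv (j+1) f x * iteratedDeriv (n-j) g x := by
        intro j hj
        have : n+1-(j+1) = n-j := by omega
        rw [this]
      rw [Finset.sum_congr rfl e3] at e2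
      rw [Finset.sum_congr rfl e4] at e1
      rw [e2] at e1
      simp only [Nat.sub_zero] at e1
      linarith [e1]
    rw [second]
    have last : (((n+1).choose 0 : ℕ) : ℝ) * iteratedDeriv 0 f x * iteratedDeriv (n+1-0) g x
        = (n.choose 0 : ℝ) * iteratedDeriv 0 f x * iteratedDeriv (n+1) g x := by
      simp
    rw [last]
    ring

lemma smooth_gg (a : ℝ) : ContDiffOn ℝ (⊤ : ℕ∞) (gg a) {t | 0 < a - 2*t} := by
  intro t ht
  have ht' : (0:ℝ) < a - 2*t := ht
  have hlin : ContDiffAt ℝ (⊤ : ℕ∞) (fun s : ℝ => a - 2*s) t :=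
    (contDiffAt_const.sub (contDiffAt_const.mul contDiffAt_id))
  have h2 : ContDiffAt ℝ (⊤ : ℕ∞) (gr 0 a) t := by
    have := (Real.contDiffAt_rpow_const_of_ne (x := a - 2*t) (p := (-(2*(0:ℕ)+3)/2 : ℝ)) ht'.ne').comp t hlin; exact this
  have hev : gg a =ᶠ[nhds t] gr 0 a :=
    Filter.eventuallyEq_of_mem ((isOpen_gset a).mem_nhds ht) (fun s hs => gg_eq_gr hs)
  exact (h2.congr_of_eventuallyEq hev).contDiffWithinAt

lemma smooth_gg_on {a : ℝ} {s : Set ℝ} (hsub : s ⊆ {t | 0 < a - 2*t}) :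
    ContDiffOn ℝ (⊤ : ℕ∞) (gg a) s := (smooth_gg a).mono hsub

lemma smooth_prod {ι : Type*} (a : ι → ℝ) (I : Finset ι) {s : Set ℝ}
    (hsub : ∀ i ∈ I, s ⊆ {t | 0 < a i - 2*t}) :
    ContDiffOn ℝ (⊤ : ℕ∞) (fun t => ∏ i ∈ I, gg (a i) t) s := by
  induction I using Finset.cons_induction with
  | empty => simpa using contDiffOn_const
  | cons i I hi ih =>
    simp only [Finset.prod_cons]
    exact (smooth_gg_on (hsub i (Finset.mem_cons_self i I))).mul
      (ih (fun j hj => hsub j (Finset.mem_cons_of_mem hj)))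

lemma leibniz_gg {ι : Type*} [DecidableEq ι] (b : ℝ) (hb : 0 < b) (a : ι → ℝ) (I : Finset ι)
    (ha : ∀ i ∈ I, 0 < a i) (M : ℕ) :
    iteratedDeriv M (fun t => gg b t * ∏ i ∈ I, gg (a i) t) 0
    = ∑ j ∈ Finset.range (M+1), (M.choose j : ℝ)
        * (df j * (Real.sqrt b ^ (2*j+3))⁻¹)
        * iteratedDeriv (M-j) (fun t => ∏ i ∈ I, gg (a i) t) 0 := by
  set s : Set ℝ := {t | 0 < b - 2*t} ∩ ⋂ i ∈ I, {t | 0 < a i - 2*t} with hs_def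
  have hsopen : IsOpen s := (isOpen_gset b).inter (isOpen_biInter_finset (fun i _ => isOpen_gset (a i)))
  have h0 : (0:ℝ) ∈ s := by
    constructor
    · simpa using hb
    · simp only [Set.mem_iInter]
      intro i hi
      simpa using ha i hi
  have hsub1 : s ⊆ {t | 0 < b - 2*t} := Set.inter_subset_left
  have hsub2 : ∀ i ∈ I, s ⊆ {t | 0 < a i - 2*t} := by
    intro i hi t ht
    have := ht.2
    simp only [Set.mem_iInter] at this
    exact this i hi
  have := leibniz_iteratedDeriv hsopen (smooth_gg_on hsub1) (smooth_prod a I hsub2) M 0 h0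
  rw [this]
  apply Finset.sum_congr rfl
  intro j _
  rw [iteratedDeriv_gg_zero hb j]

noncomputable def Dq (x y r : ℝ) : ℝ :=
  ((-r) * y ^ (r-1) * (x - y) + (x ^ r - y ^ r)) / (x - y)^2

lemma quot_hasDerivAt (X1 Xb cc : ℝ) (hy : 0 < Xb + cc) (hne : X1 ≠ Xb) (r : ℝ) :
    HasDerivAt (fun V' => ((X1+cc) ^ r - (V'+cc) ^ r) / (X1 - V'))
      (Dq (X1+cc) (Xb+cc) r) Xb := by
  have hinner : HasDerivAt (fun V' : ℝ => V' + cc) 1 Xb := (hasDerivAt_id Xb).add_const cc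
  have hpow : HasDerivAt (fun V' : ℝ => (V'+cc) ^ r) (r * (Xb+cc) ^ (r-1) * 1) Xb := by
    have := (Real.hasDerivAt_rpow_const (p := r) (Or.inl hy.ne')).comp Xb hinner; exact this
  have hN : HasDerivAt (fun V' : ℝ => (X1+cc) ^ r - (V'+cc) ^ r)
      (-(r * (Xb+cc) ^ (r-1) * 1)) Xb := hpow.const_sub _
  have hd : HasDerivAt (fun V' : ℝ => X1 - V') (-1) Xb := by
    simpa using (hasDerivAt_id Xb).const_sub X1
  have hd0 : X1 - Xb ≠ 0 := sub_ne_zero.mpr hne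
  have := hN.div hd hd0
  refine this.congr_deriv ?_
  unfold Dq
  have e : (X1+cc) - (Xb+cc) = X1 - Xb := by ring
  rw [e]
  field_simp
  ring

lemma poly_T (n : ℕ) : ∀ u v : ℝ,
    (∑ l ∈ Finset.range (n+1), (2*(l:ℝ)+1) * u^(2*l) * v^(2*(n-l))) * (u^2-v^2)^2
    = (2*(n:ℝ)+1)*u^(2*n+4) - (2*(n:ℝ)+3)*u^(2*n+2)*v^2 + u^2*v^(2*n+2) + v^(2*n+4) := by
  induction n with
  | zero => intro u v; norm_num; ring
  | succ n ih =>
    intro u v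
    have step : ∑ l ∈ Finset.range (n+2), (2*(l:ℝ)+1) * u^(2*l) * v^(2*(n+1-l))
        = v^2 * (∑ l ∈ Finset.range (n+1), (2*(l:ℝ)+1) * u^(2*l) * v^(2*(n-l)))
          + (2*(n:ℝ)+3) * u^(2*(n+1)) := by
      rw [Finset.sum_range_succ]
      have hlast : (2*((n+1:ℕ):ℝ)+1) * u^(2*(n+1)) * v^(2*(n+1-(n+1)))
          = (2*(n:ℝ)+3) * u^(2*(n+1)) := by
        have h0 : n+1-(n+1) = 0 := by omega
        rw [h0]
        push_cast; ring
      rw [hlast, Finset.mul_sum]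
      congr 1
      apply Finset.sum_congr rfl
      intro l hl
      have hln : l ≤ n := by have := Finset.mem_range.mp hl; omega
      have : 2*(n+1-l) = 2*(n-l) + 2 := by omega
      rw [this, pow_add]
      ring
    rw [step, add_mul, mul_assoc, ih u v]
    push_cast
    have e1 : 2*(n+1)+4 = (2*n+4)+2 := by omega
    have e2 : 2*(n+1)+2 = (2*n+2)+2 := by omega
    have e3 : 2*(n+1) = (2*n)+2 := by omega
    rw [e1, e2, e3, pow_add, pow_add, pow_add]
    ring

lemma core (x y : ℝ) (hx : 0 < x) (hy : 0 < y) (hxy : x ≠ y) (j : ℕ) :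
    2 * Dq x y (-(2*(j:ℝ)+3)/2)
      + x ^ (-(2*(j:ℝ)+3)/2) / (Real.sqrt x * Real.sqrt y * (Real.sqrt x + Real.sqrt y)^2)
    = ∑ l ∈ Finset.range (j+2), (2*(l:ℝ)+1) * ((x:ℝ) ^ (j+2-l))⁻¹
        * (Real.sqrt y ^ (2*l+3))⁻¹ := by
  unfold Dq
  rw [show -(-(2*(j:ℝ)+3)/2) = (2*(j:ℝ)+3)/2 by ring]
  have hexp : -(2*(j:ℝ)+3)/2 - 1 = -(2*((j+1 : ℕ):ℝ)+3)/2 := by push_cast; ring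
  rw [hexp, ← sqrt_pow_inv_eq hy (j+1), ← sqrt_pow_inv_eq hx j, ← sqrt_pow_inv_eq hy j]
  set u := Real.sqrt x with hu_def
  set v := Real.sqrt y with hv_def
  have hu : 0 < u := Real.sqrt_pos.mpr hx
  have hv : 0 < v := Real.sqrt_pos.mpr hy
  have hx2 : x = u^2 := (Real.sq_sqrt hx.le).symm
  have hy2 : y = v^2 := (Real.sq_sqrt hy.le).symm
  have huv : u ≠ v := by
    intro h; apply hxy; rw [hx2, hy2, h]
  have hsum : ∑ l ∈ Finset.range (j+2), (2*(l:ℝ)+1) * ((x:ℝ) ^ (j+2-l))⁻¹ * (v ^ (2*l+3))⁻¹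
      = (∑ l ∈ Finset.range (j+1+1), (2*(l:ℝ)+1) * u^(2*l) * v^(2*((j+1)-l)))
        / (u^(2*(j+1)+2) * v^(2*(j+1)+3)) := by
    rw [Finset.sum_div]
    apply Finset.sum_congr rfl
    intro l hl
    have hl' : l ≤ j+1 := by have := Finset.mem_range.mp hl; omega
    have e1 : x ^ (j+2-l) = u ^ (2*(j+2-l)) := by rw [hx2, ← pow_mul]
    have e2 : u^(2*(j+1)+2) = u^(2*(j+2-l)) * u^(2*l) := by
      rw [← pow_add]; congr 1; omega
    have e3 : v^(2*(j+1)+3) = v^(2*l+3) * v^(2*((j+1)-l)) := by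
      rw [← pow_add]; congr 1; omega
    rw [e1, e2, e3]
    have h1 : u^(2*(j+2-l)) ≠ 0 := by positivity
    have h2 : u^(2*l) ≠ 0 := by positivity
    have h3 : v^(2*l+3) ≠ 0 := by positivity
    have h4 : v^(2*((j+1)-l)) ≠ 0 := by positivity
    field_simp
  rw [hsum]
  have hTT := poly_T (j+1) u v
  have hden : (u^2 - v^2) ≠ 0 := by
    intro h
    apply hxy
    rw [hx2, hy2]
    nlinarith [sq_nonneg (u-v), sq_nonneg (u+v)]
  have hS : (∑ l ∈ Finset.range (j+1+1), (2*(l:ℝ)+1) * u^(2*l) * v^(2*((j+1)-l)))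
      = ((2*((j+1:ℕ):ℝ)+1)*u^(2*(j+1)+4) - (2*((j+1:ℕ):ℝ)+3)*u^(2*(j+1)+2)*v^2
          + u^2*v^(2*(j+1)+2) + v^(2*(j+1)+4)) / (u^2-v^2)^2 := by
    rw [eq_div_iff (by positivity)]
    exact hTT
  rw [hS]
  rw [hx2, hy2]
  have hu0 : u ≠ 0 := hu.ne'
  have hv0 : v ≠ 0 := hv.ne'
  have huv2 : u + v ≠ 0 := by positivity
  have hd2 : u^2 - v^2 ≠ 0 := hden
  have e5 : 2*(j+1)+3 = 2*j+5 := by omega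
  have e6 : 2*(j+1)+2 = 2*j+4 := by omega
  have e7 : 2*(j+1)+4 = 2*j+6 := by omega
  rw [e5, e6, e7]
  push_cast
  field_simp
  ring

set_option maxHeartbeats 2000000 in
/-- Evaluation of the inhomogeneity of the `(1+⋯+1)`-point Schwinger–Dyson equation with
`B` boundary components: with `G₂` the `(1+1)`-point function, `F(Y;I)` the factorised ansatz
with `B−1` boundary components and `H(U,V;I) = 16λ²·∂_V[(F(U;I)−F(V;I))/(U−V)]`, one has
`−λ·Σ_{β=2}^B [H(X¹,X^β;{2,…,B}∖{β}) + 2G₂(X¹|X^β)F(X¹;{2,…,B}∖{β})]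
 = ((−2λ)^{3B−4}/ρ₀)·Σ_M Σ_j Σ_l γ^M·C(M,j)·((2j+1)!!(2l+1)/(2l+1)!!)·(X¹+c)^{−(j−l+2)}
   ·Σ_β (d^l/dt^l)[(X^β+c−2t)^{−3/2}]·(d^{M−j}/dt^{M−j})[Π_{β'≠β}(X^{β'}+c−2t)^{−3/2}]|_{t=0}`. -/
theorem stmt_19 (c lam ρ₀ : ℝ) (hc : -1 < c) (hρ₀ : ρ₀ ≠ 0)
    (B : ℕ) (hB : 4 ≤ B) (γ : ℕ → ℝ)
    (X : Fin B → ℝ) (hX : ∀ β, 0 < X β + c)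
    (hne : ∀ β : Fin B, β ≠ ⟨0, by omega⟩ → X ⟨0, by omega⟩ ≠ X β)
    (G₂ : ℝ → ℝ → ℝ)
    (hG₂ : ∀ U V, G₂ U V = 4 * lam ^ 2 /
      (Real.sqrt (U + c) * Real.sqrt (V + c) * (Real.sqrt (U + c) + Real.sqrt (V + c)) ^ 2))
    (F : ℝ → Finset (Fin B) → ℝ)
    (hF : ∀ (Y : ℝ) (I : Finset (Fin B)),
      F Y I = ((-2 * lam) ^ (3 * (B - 1) - 4) / ρ₀) *
        ∑ M ∈ Finset.range (B - 4 + 1), γ M *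
          iteratedDeriv M (fun t => (Real.sqrt (Y + c - 2 * t) ^ 3)⁻¹ *
            ∏ β' ∈ I, (Real.sqrt (X β' + c - 2 * t) ^ 3)⁻¹) 0)
    (H : ℝ → ℝ → Finset (Fin B) → ℝ)
    (hH : ∀ (U V : ℝ) (I : Finset (Fin B)), U ≠ V →
      H U V I = 16 * lam ^ 2 * deriv (fun V' => (F U I - F V' I) / (U - V')) V) :
    -lam * ∑ β ∈ Finset.univ.erase ⟨0, by omega⟩,
        (H (X ⟨0, by omega⟩) (X β) ((Finset.univ.erase ⟨0, by omega⟩).erase β)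
          + 2 * G₂ (X ⟨0, by omega⟩) (X β) *
              F (X ⟨0, by omega⟩) ((Finset.univ.erase ⟨0, by omega⟩).erase β))
    = ((-2 * lam) ^ (3 * B - 4) / ρ₀) *
        ∑ M ∈ Finset.range (B - 4 + 1),
          ∑ j ∈ Finset.range (M + 1),
            ∑ l ∈ Finset.range (j + 2),
              γ M * ((M.choose j : ℕ) : ℝ) * (df j * (2 * l + 1) / df l) *
                ((X ⟨0, by omega⟩ + c) ^ (j + 2 - l))⁻¹ *
                ∑ β ∈ Finset.univ.erase ⟨0, by omega⟩,
                  iteratedDeriv l (fun t => (Real.sqrt (X β + c - 2 * t) ^ 3)⁻¹) 0 *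
                    iteratedDeriv (M - j)
                      (fun t => ∏ β' ∈ (Finset.univ.erase ⟨0, by omega⟩).erase β,
                        (Real.sqrt (X β' + c - 2 * t) ^ 3)⁻¹) 0 := by
  have hB0 : 0 < B := by omega
  set β₀ : Fin B := ⟨0, by omega⟩ with hβ₀def
  set E : Finset (Fin B) := Finset.univ.erase β₀ with hEdef
  set K : ℝ := (-2 * lam) ^ (3 * (B - 1) - 4) / ρ₀ with hKdef
  have hx : 0 < X β₀ + c := hX β₀
  -- explicit formula for F
  have hFY : ∀ β ∈ E, ∀ Y : ℝ, 0 < Y + c → F Y (E.erase β) =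
      ∑ M ∈ Finset.range (B - 4 + 1), ∑ j ∈ Finset.range (M + 1),
        (K * γ M * (M.choose j : ℝ) * df j * iteratedDeriv (M - j)
           (fun t => ∏ β' ∈ E.erase β, (Real.sqrt (X β' + c - 2 * t) ^ 3)⁻¹) 0)
        * (Real.sqrt (Y + c) ^ (2 * j + 3))⁻¹ := by
    intro β hβ Y hY
    rw [hF, Finset.mul_sum]
    apply Finset.sum_congr rfl
    intro M _
    have h1 : iteratedDeriv M (fun t => (Real.sqrt (Y + c - 2 * t) ^ 3)⁻¹ *
          ∏ β' ∈ E.erase β, (Real.sqrt (X β' + c - 2 * t) ^ 3)⁻¹) 0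
        = ∑ j ∈ Finset.range (M + 1), (M.choose j : ℝ)
            * (df j * (Real.sqrt (Y + c) ^ (2 * j + 3))⁻¹)
            * iteratedDeriv (M - j)
              (fun t => ∏ β' ∈ E.erase β, (Real.sqrt (X β' + c - 2 * t) ^ 3)⁻¹) 0 := by
      have := leibniz_gg (Y + c) hY (fun β' => X β' + c) (E.erase β) (fun i _ => hX i) M
      simpa only [gg] using this
    rw [h1, Finset.mul_sum, Finset.mul_sum]
    apply Finset.sum_congr rfl
    intro j _
    ring
  -- explicit formula for H
  have hHβ : ∀ β ∈ E, H (X β₀) (X β) (E.erase β)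
      = 16 * lam ^ 2 * ∑ M ∈ Finset.range (B - 4 + 1), ∑ j ∈ Finset.range (M + 1),
          (K * γ M * (M.choose j : ℝ) * df j * iteratedDeriv (M - j)
             (fun t => ∏ β' ∈ E.erase β, (Real.sqrt (X β' + c - 2 * t) ^ 3)⁻¹) 0)
          * Dq (X β₀ + c) (X β + c) (-(2*(j:ℝ)+3)/2) := by
    intro β hβ
    have hβne : β ≠ β₀ := Finset.ne_of_mem_erase hβ
    have hXne : X β₀ ≠ X β := hne β hβne
    have hyβ : 0 < X β + c := hX β
    rw [hH _ _ _ hXne]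
    congr 1
    have hopen : IsOpen {V' : ℝ | 0 < V' + c} := by
      have : {V' : ℝ | 0 < V' + c} = (fun V' : ℝ => V' + c) ⁻¹' Set.Ioi 0 := rfl
      rw [this]; exact isOpen_Ioi.preimage (continuous_id.add continuous_const)
    have hev : (fun V' => (F (X β₀) (E.erase β) - F V' (E.erase β)) / (X β₀ - V'))
        =ᶠ[nhds (X β)] (fun V' => ∑ M ∈ Finset.range (B - 4 + 1), ∑ j ∈ Finset.range (M + 1),
          (K * γ M * (M.choose j : ℝ) * df j * iteratedDeriv (M - j)
             (fun t => ∏ β' ∈ E.erase β, (Real.sqrt (X β' + c - 2 * t) ^ 3)⁻¹) 0) *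
          (((X β₀ + c) ^ (-(2*(j:ℝ)+3)/2) - (V' + c) ^ (-(2*(j:ℝ)+3)/2)) / (X β₀ - V'))) := by
      apply Filter.eventuallyEq_of_mem (hopen.mem_nhds hyβ)
      intro V' hV'
      have hV'c : 0 < V' + c := hV'
      simp only
      rw [hFY β hβ (X β₀) hx, hFY β hβ V' hV'c]
      rw [← Finset.sum_sub_distrib, Finset.sum_div]
      apply Finset.sum_congr rfl; intro M _
      rw [← Finset.sum_sub_distrib, Finset.sum_div]
      apply Finset.sum_congr rfl; intro j _
      rw [sqrt_pow_inv_eq hx j, sqrt_pow_inv_eq hV'c j]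
      ring
    rw [hev.deriv_eq]
    have hder : HasDerivAt (fun V' => ∑ M ∈ Finset.range (B - 4 + 1), ∑ j ∈ Finset.range (M + 1),
          (K * γ M * (M.choose j : ℝ) * df j * iteratedDeriv (M - j)
             (fun t => ∏ β' ∈ E.erase β, (Real.sqrt (X β' + c - 2 * t) ^ 3)⁻¹) 0) *
          (((X β₀ + c) ^ (-(2*(j:ℝ)+3)/2) - (V' + c) ^ (-(2*(j:ℝ)+3)/2)) / (X β₀ - V')))
        (∑ M ∈ Finset.range (B - 4 + 1), ∑ j ∈ Finset.range (M + 1),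
          (K * γ M * (M.choose j : ℝ) * df j * iteratedDeriv (M - j)
             (fun t => ∏ β' ∈ E.erase β, (Real.sqrt (X β' + c - 2 * t) ^ 3)⁻¹) 0) *
          Dq (X β₀ + c) (X β + c) (-(2*(j:ℝ)+3)/2)) (X β) := by
      apply HasDerivAt.fun_sum; intro M _
      apply HasDerivAt.fun_sum; intro j _
      exact (quot_hasDerivAt (X β₀) (X β) c hyβ hXne _).const_mul _
    rw [hder.deriv]
  -- combined per-β formula
  have hcomb : ∀ β ∈ E,
      H (X β₀) (X β) (E.erase β) + 2 * G₂ (X β₀) (X β) * F (X β₀) (E.erase β)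
      = ∑ M ∈ Finset.range (B - 4 + 1), ∑ j ∈ Finset.range (M + 1),
          ∑ l ∈ Finset.range (j + 2),
          (8 * lam ^ 2 * (K * γ M * (M.choose j : ℝ) * df j * iteratedDeriv (M - j)
             (fun t => ∏ β' ∈ E.erase β, (Real.sqrt (X β' + c - 2 * t) ^ 3)⁻¹) 0))
            * ((2*(l:ℝ)+1) * ((X β₀ + c) ^ (j + 2 - l))⁻¹
                * (Real.sqrt (X β + c) ^ (2 * l + 3))⁻¹) := by
    intro β hβ
    have hβne : β ≠ β₀ := Finset.ne_of_mem_erase hβ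
    have hXne : X β₀ ≠ X β := hne β hβne
    have hyβ : 0 < X β + c := hX β
    have hxyne : X β₀ + c ≠ X β + c := by
      intro h; exact hXne (by linarith)
    rw [hHβ β hβ, hG₂, hFY β hβ (X β₀) hx]
    rw [Finset.mul_sum, Finset.mul_sum, ← Finset.sum_add_distrib]
    apply Finset.sum_congr rfl; intro M _
    rw [Finset.mul_sum, Finset.mul_sum, ← Finset.sum_add_distrib]
    apply Finset.sum_congr rfl; intro j _
    have hcore := core (X β₀ + c) (X β + c) hx hyβ hxyne j
    rw [← Finset.mul_sum, ← hcore, sqrt_pow_inv_eq hx j]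
    ring
  -- final assembly
  calc -lam * ∑ β ∈ E,
        (H (X β₀) (X β) (E.erase β) + 2 * G₂ (X β₀) (X β) * F (X β₀) (E.erase β))
      = ∑ β ∈ E, ∑ M ∈ Finset.range (B - 4 + 1), ∑ j ∈ Finset.range (M + 1),
          ∑ l ∈ Finset.range (j + 2),
          ((-2 * lam) ^ (3 * B - 4) / ρ₀) * (γ M * ((M.choose j : ℕ) : ℝ) * df j
            * (2 * (l:ℝ) + 1) * ((X β₀ + c) ^ (j + 2 - l))⁻¹
            * ((Real.sqrt (X β + c) ^ (2 * l + 3))⁻¹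
               * iteratedDeriv (M - j)
                  (fun t => ∏ β' ∈ E.erase β, (Real.sqrt (X β' + c - 2 * t) ^ 3)⁻¹) 0)) := by
        rw [Finset.mul_sum]
        apply Finset.sum_congr rfl; intro β hβ
        rw [hcomb β hβ, Finset.mul_sum]
        apply Finset.sum_congr rfl; intro M _
        rw [Finset.mul_sum]
        apply Finset.sum_congr rfl; intro j _
        rw [Finset.mul_sum]
        apply Finset.sum_congr rfl; intro l _
        have hpow3 : (-2 * lam) ^ (3 * B - 4)
            = (-2 * lam) ^ (3 * (B - 1) - 4) * (-2 * lam) ^ 3 := by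
          rw [← pow_add]; congr 1; omega
        rw [hpow3, hKdef]
        ring
    _ = ∑ M ∈ Finset.range (B - 4 + 1), ∑ j ∈ Finset.range (M + 1),
          ∑ l ∈ Finset.range (j + 2), ∑ β ∈ E,
          ((-2 * lam) ^ (3 * B - 4) / ρ₀) * (γ M * ((M.choose j : ℕ) : ℝ) * df j
            * (2 * (l:ℝ) + 1) * ((X β₀ + c) ^ (j + 2 - l))⁻¹
            * ((Real.sqrt (X β + c) ^ (2 * l + 3))⁻¹
               * iteratedDeriv (M - j)
                  (fun t => ∏ β' ∈ E.erase β, (Real.sqrt (X β' + c - 2 * t) ^ 3)⁻¹) 0)) := by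
        rw [Finset.sum_comm]
        apply Finset.sum_congr rfl; intro M _
        rw [Finset.sum_comm]
        apply Finset.sum_congr rfl; intro j _
        rw [Finset.sum_comm]
    _ = ((-2 * lam) ^ (3 * B - 4) / ρ₀) *
        ∑ M ∈ Finset.range (B - 4 + 1),
          ∑ j ∈ Finset.range (M + 1),
            ∑ l ∈ Finset.range (j + 2),
              γ M * ((M.choose j : ℕ) : ℝ) * (df j * (2 * l + 1) / df l) *
                ((X β₀ + c) ^ (j + 2 - l))⁻¹ *
                ∑ β ∈ E,
                  iteratedDeriv l (fun t => (Real.sqrt (X β + c - 2 * t) ^ 3)⁻¹) 0 *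
                    iteratedDeriv (M - j)
                      (fun t => ∏ β' ∈ E.erase β,
                        (Real.sqrt (X β' + c - 2 * t) ^ 3)⁻¹) 0 := by
        rw [Finset.mul_sum]
        apply Finset.sum_congr rfl; intro M _
        rw [Finset.mul_sum]
        apply Finset.sum_congr rfl; intro j _
        rw [Finset.mul_sum]
        apply Finset.sum_congr rfl; intro l _
        have hdfl : df l ≠ 0 := (df_pos l).ne'
        have hsum2 : ∑ β ∈ E,
              iteratedDeriv l (fun t => (Real.sqrt (X β + c - 2 * t) ^ 3)⁻¹) 0 *
                iteratedDeriv (M - j)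
                  (fun t => ∏ β' ∈ E.erase β, (Real.sqrt (X β' + c - 2 * t) ^ 3)⁻¹) 0
            = df l * ∑ β ∈ E, (Real.sqrt (X β + c) ^ (2 * l + 3))⁻¹ *
                iteratedDeriv (M - j)
                  (fun t => ∏ β' ∈ E.erase β, (Real.sqrt (X β' + c - 2 * t) ^ 3)⁻¹) 0 := by
          rw [Finset.mul_sum]
          apply Finset.sum_congr rfl; intro β hβ
          have hiter : iteratedDeriv l (fun t => (Real.sqrt (X β + c - 2 * t) ^ 3)⁻¹) 0
              = df l * (Real.sqrt (X β + c) ^ (2 * l + 3))⁻¹ := by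
            exact iteratedDeriv_gg_zero (hX β) l
          rw [hiter]
          ring
        rw [hsum2]
        have hcancel : γ M * ((M.choose j : ℕ) : ℝ) * (df j * (2 * l + 1) / df l) *
              ((X β₀ + c) ^ (j + 2 - l))⁻¹ *
              (df l * ∑ β ∈ E, (Real.sqrt (X β + c) ^ (2 * l + 3))⁻¹ *
                iteratedDeriv (M - j)
                  (fun t => ∏ β' ∈ E.erase β, (Real.sqrt (X β' + c - 2 * t) ^ 3)⁻¹) 0)
            = γ M * ((M.choose j : ℕ) : ℝ) * (df j * (2 * (l:ℝ) + 1)) *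
              ((X β₀ + c) ^ (j + 2 - l))⁻¹ *
              (∑ β ∈ E, (Real.sqrt (X β + c) ^ (2 * l + 3))⁻¹ *
                iteratedDeriv (M - j)
                  (fun t => ∏ β' ∈ E.erase β, (Real.sqrt (X β' + c - 2 * t) ^ 3)⁻¹) 0) := by
          field_simp
        rw [hcancel, Finset.mul_sum, Finset.mul_sum]
        apply Finset.sum_congr rfl; intro β hβ
        ring
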